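/- If A : 𝒟 → 𝒟_* is a strict contraction, i.e. ‖A f‖ < ‖f‖ for every nonzero f ∈ 𝒟, then the perturbed operator U_A is a completely non-unitary contraction with the same defect spaces as U₀: the closure of the range of (I − U_A*U_A)^{1/2} equals 𝒟 and the closure of the range of (I − U_A U_A*)^{1/2} equals 𝒟_*. -/

import Mathlib

/-!
On `𝒟ᗮ = ker D` the operator `U₀` is isometric and maps into `𝒟₊ᗮ = ker D₊`, so
`U_A x = U₀ (x - P x) + A (P x)` is an orthogonal sum and `‖x‖² - ‖U_A x‖² = ‖P x‖² - ‖A (P x)‖²`.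
Since `A` (and hence `A*`) is a strict contraction, the vectors on which `U_A` (resp. `U_A*`) is
isometric are exactly `𝒟ᗮ` (resp. `𝒟₊ᗮ`); these are the kernels of the new defect operators, which
identifies the defect spaces. On a reducing subspace where `U_A` is unitary, `U_A` and `U_A*` are
therefore isometric and agree with `U₀` and `U₀*`, so complete non-unitarity passes from `U₀`
to `U_A`.
-/

open MeasureTheory Filter ContinuousLinearMap
open scoped ENNReal Topology

noncomputable section

/-- A contraction is *completely non-unitary* if there is no nonzero closed subspace,
invariant under both the operator and its adjoint, on which it restricts to a unitary. -/
def IsCnu {H : Type*} [NormedAddCommGroup H] [InnerProductSpace ℂ H] [CompleteSpace H]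
    (U : H →L[ℂ] H) : Prop :=
  ∀ K : Submodule ℂ H, IsClosed (K : Set H) →
    (∀ x ∈ K, U x ∈ K) → (∀ x ∈ K, ContinuousLinearMap.adjoint U x ∈ K) →
    (∀ x ∈ K, ‖U x‖ = ‖x‖) → (∀ y ∈ K, ∃ x ∈ K, U x = y) → K = ⊥

/-- Normalized Lebesgue (arclength) measure on the unit circle `𝕋`, as a measure on `ℂ`. -/
def mCircle : Measure ℂ :=
  (ENNReal.ofReal (2 * Real.pi))⁻¹ •
    (volume.restrict (Set.Ioc (0:ℝ) (2 * Real.pi))).map (circleMap 0 1)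

/-- The characteristic function `Θ(z) = -U₀ + z D₊ (I - z U₀*)⁻¹ D` of a contraction `U₀`
with defect operators `D`, `Dstar`, as an operator on all of `H` (to be restricted to the
defect space `𝒟`). -/
def charFun {H : Type*} [NormedAddCommGroup H] [InnerProductSpace ℂ H] [CompleteSpace H]
    (U₀ D Dstar : H →L[ℂ] H) (z : ℂ) : H →L[ℂ] H :=
  -U₀ + z • (Dstar ∘L Ring.inverse (1 - z • ContinuousLinearMap.adjoint U₀) ∘L D)

/-- `T^{(k)}`: nonnegative powers of `T`; powers of the adjoint for negative `k`. -/
def zpowOp {H : Type*} [NormedAddCommGroup H] [InnerProductSpace ℂ H] [CompleteSpace H]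
    (T : H →L[ℂ] H) (k : ℤ) : H →L[ℂ] H :=
  if 0 ≤ k then T ^ k.toNat else (ContinuousLinearMap.adjoint T) ^ (-k).toNat

/-- At `ξ ∈ 𝕋`, the radial limit of `Θ` restricted to `𝒟` exists in operator norm and is a
unitary operator from `𝒟` onto `𝒟₊`. -/
def HasUnitaryRadialLimitAt {H : Type*} [NormedAddCommGroup H] [InnerProductSpace ℂ H]
    [CompleteSpace H] (Dsp DspStar : Submodule ℂ H) (Θ : ℂ → (H →L[ℂ] H)) (ξ : ℂ) : Prop :=
  ∃ L : ↥Dsp →L[ℂ] H,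
    Tendsto (fun r : ℝ => (Θ ((r : ℂ) * ξ)).comp Dsp.subtypeL) (𝓝[<] (1:ℝ)) (𝓝 L) ∧
      (∀ x : ↥Dsp, ‖L x‖ = ‖x‖) ∧ LinearMap.range (L : ↥Dsp →ₗ[ℂ] H) = DspStar

section Defect
variable {𝕜 H : Type*} [RCLike 𝕜] [NormedAddCommGroup H] [InnerProductSpace 𝕜 H] [CompleteSpace H]
  {U D : H →L[𝕜] H}

theorem norm_defect_apply_sq (hD_sa : IsSelfAdjoint D) (hD : D ∘L D = 1 - adjoint U ∘L U)
    (x : H) : ‖D x‖ ^ 2 = ‖x‖ ^ 2 - ‖U x‖ ^ 2 := by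
  rw [apply_norm_sq_eq_inner_adjoint_left, hD_sa.adjoint_eq, hD,
    apply_norm_sq_eq_inner_adjoint_left U, ← inner_self_eq_norm_sq (𝕜 := 𝕜)]
  simp [inner_sub_left]

theorem defect_apply_eq_zero_iff (hD_sa : IsSelfAdjoint D) (hD : D ∘L D = 1 - adjoint U ∘L U)
    {x : H} : D x = 0 ↔ ‖U x‖ = ‖x‖ := by
  rw [← norm_eq_zero, ← pow_eq_zero_iff two_ne_zero, norm_defect_apply_sq hD_sa hD,
    sub_eq_zero, sq_eq_sq₀ (norm_nonneg _) (norm_nonneg _), eq_comm]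

theorem adjoint_apply_apply_of_norm_eq (hD_sa : IsSelfAdjoint D)
    (hD : D ∘L D = 1 - adjoint U ∘L U) {x : H} (hx : ‖U x‖ = ‖x‖) : adjoint U (U x) = x := by
  have h : (D ∘L D) x = 0 := by
    simp [(defect_apply_eq_zero_iff hD_sa hD).2 hx]
  rw [hD] at h
  exact (sub_eq_zero.1 h).symm

theorem mem_orthogonal_closure_range_defect_iff (hD_sa : IsSelfAdjoint D)
    (hD : D ∘L D = 1 - adjoint U ∘L U) {x : H} :
    x ∈ (LinearMap.range (D : H →ₗ[𝕜] H)).topologicalClosureᗮ ↔ ‖U x‖ = ‖x‖ := by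
  rw [Submodule.orthogonal_closure, orthogonal_range, hD_sa.adjoint_eq, LinearMap.mem_ker,
    coe_coe, defect_apply_eq_zero_iff hD_sa hD]

theorem closure_range_defect_eq (hD_sa : IsSelfAdjoint D) (hD : D ∘L D = 1 - adjoint U ∘L U)
    {S : Submodule 𝕜 H} [S.HasOrthogonalProjection] (hU : ∀ x, ‖U x‖ = ‖x‖ ↔ x ∈ Sᗮ) :
    (LinearMap.range (D : H →ₗ[𝕜] H)).topologicalClosure = S := by
  have h : (LinearMap.range (D : H →ₗ[𝕜] H)).topologicalClosureᗮ = Sᗮ := by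
    ext x
    rw [mem_orthogonal_closure_range_defect_iff hD_sa hD, hU]
  rw [← Submodule.orthogonal_orthogonal (LinearMap.range (D : H →ₗ[𝕜] H)).topologicalClosure, h,
    S.orthogonal_orthogonal]

theorem apply_mem_orthogonal_closure_range_defect {D' : H →L[𝕜] H} (hD_sa : IsSelfAdjoint D)
    (hD : D ∘L D = 1 - adjoint U ∘L U) (hD'_sa : IsSelfAdjoint D')
    (hD' : D' ∘L D' = 1 - U ∘L adjoint U) {x : H}
    (hx : x ∈ (LinearMap.range (D : H →ₗ[𝕜] H)).topologicalClosureᗮ) :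
    U x ∈ (LinearMap.range (D' : H →ₗ[𝕜] H)).topologicalClosureᗮ := by
  have hD'' : D' ∘L D' = 1 - adjoint (adjoint U) ∘L adjoint U := by rwa [adjoint_adjoint]
  rw [mem_orthogonal_closure_range_defect_iff hD_sa hD] at hx
  rw [mem_orthogonal_closure_range_defect_iff hD'_sa hD'',
    adjoint_apply_apply_of_norm_eq hD_sa hD hx, hx]

end Defect

theorem norm_adjoint_apply_lt {𝕜 E F : Type*} [RCLike 𝕜] [NormedAddCommGroup E]
    [InnerProductSpace 𝕜 E] [CompleteSpace E] [NormedAddCommGroup F] [InnerProductSpace 𝕜 F]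
    [CompleteSpace F] {A : E →L[𝕜] F} (hA : ∀ f, f ≠ 0 → ‖A f‖ < ‖f‖) (g : F) (hg : g ≠ 0) :
    ‖adjoint A g‖ < ‖g‖ := by
  have hA_le : ‖adjoint A‖ ≤ 1 := by
    rw [LinearIsometryEquiv.norm_map]
    refine opNorm_le_bound A zero_le_one fun f => ?_
    rcases eq_or_ne f 0 with rfl | hf
    · simp
    · simpa using (hA f hf).le
  refine (le_of_opNorm_le _ hA_le g).trans_eq (one_mul _) |>.lt_of_ne fun h_eq => ?_
  set h := adjoint A g
  have hh : h ≠ 0 := by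
    rw [← norm_pos_iff, h_eq]; exact norm_pos_iff.2 hg
  -- `‖h‖² = re ⟪g, A h⟫ ≤ ‖g‖ ‖A h‖ < ‖g‖ ‖h‖ = ‖h‖²`
  have h_sq : ‖h‖ ^ 2 = RCLike.re (inner 𝕜 g (A h)) := by
    rw [← adjoint_inner_left, ← inner_self_eq_norm_sq (𝕜 := 𝕜)]
  have h_le : RCLike.re (inner 𝕜 g (A h)) ≤ ‖g‖ * ‖A h‖ :=
    (RCLike.re_le_norm _).trans (norm_inner_le_norm _ _)
  have h_lt := mul_lt_mul_of_pos_left (hA h hh) (norm_pos_iff.2 hg)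
  rw [h_eq, sq] at h_sq
  rw [h_eq] at h_lt
  linarith

section Perturbation
variable {𝕜 H : Type*} [RCLike 𝕜] [NormedAddCommGroup H] [InnerProductSpace 𝕜 H]

def perturbation (U : H →L[𝕜] H) (S T : Submodule 𝕜 H) [S.HasOrthogonalProjection]
    [T.HasOrthogonalProjection] (A : S →L[𝕜] T) : H →L[𝕜] H :=
  (1 - T.starProjection) ∘L U ∘L (1 - S.starProjection) +
    T.subtypeL ∘L A ∘L S.orthogonalProjectionOnto

variable {U : H →L[𝕜] H} {S T : Submodule 𝕜 H} [S.HasOrthogonalProjection]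
  [T.HasOrthogonalProjection] {A : S →L[𝕜] T}

theorem perturbation_apply (hU : ∀ x ∈ Sᗮ, U x ∈ Tᗮ) (x : H) :
    perturbation U S T A x = U (x - S.starProjection x) + A (S.orthogonalProjectionOnto x) := by
  have h : T.starProjection (U (x - S.starProjection x)) = 0 :=
    (Submodule.starProjection_apply_eq_zero_iff _).2
      (hU _ (Submodule.sub_starProjection_mem_orthogonal x))
  simp only [perturbation, add_apply, comp_apply, sub_apply, one_apply_eq_self, h, sub_zero,
    Submodule.subtypeL_apply]

theorem perturbation_apply_of_mem_orthogonal (hU : ∀ x ∈ Sᗮ, U x ∈ Tᗮ) {x : H} (hx : x ∈ Sᗮ) :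
    perturbation U S T A x = U x := by
  rw [perturbation_apply hU, (Submodule.starProjection_apply_eq_zero_iff _).2 hx,
    Submodule.orthogonalProjectionOnto_eq_zero_iff.2 hx, sub_zero, map_zero,
    Submodule.coe_zero, add_zero]

theorem norm_sq_sub_norm_perturbation_apply_sq (hU : ∀ x ∈ Sᗮ, U x ∈ Tᗮ)
    (hU_iso : ∀ x ∈ Sᗮ, ‖U x‖ = ‖x‖) (x : H) :
    ‖x‖ ^ 2 - ‖perturbation U S T A x‖ ^ 2 =
      ‖S.orthogonalProjectionOnto x‖ ^ 2 - ‖A (S.orthogonalProjectionOnto x)‖ ^ 2 := by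
  have hx := Submodule.sub_starProjection_mem_orthogonal (K := S) x
  have h_orth : inner 𝕜 (U (x - S.starProjection x)) (A (S.orthogonalProjectionOnto x) : H) = 0 :=
    Submodule.inner_left_of_mem_orthogonal (A _).2 (hU _ hx)
  have hV := norm_add_sq_eq_norm_sq_add_norm_sq_of_inner_eq_zero _ _ h_orth
  rw [← perturbation_apply hU, hU_iso _ hx, ← Submodule.starProjection_orthogonal_val] at hV
  rw [Submodule.norm_sq_eq_add_norm_sq_starProjection x S, sq, sq, sq, sq, hV]
  simp only [Submodule.starProjection_apply, Submodule.coe_norm]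
  ring

theorem norm_perturbation_apply_le (hU : ∀ x ∈ Sᗮ, U x ∈ Tᗮ) (hU_iso : ∀ x ∈ Sᗮ, ‖U x‖ = ‖x‖)
    (hA : ∀ f, f ≠ 0 → ‖A f‖ < ‖f‖) (x : H) : ‖perturbation U S T A x‖ ≤ ‖x‖ := by
  have h := norm_sq_sub_norm_perturbation_apply_sq (A := A) hU hU_iso x
  set p := S.orthogonalProjectionOnto x
  have hp : ‖A p‖ ≤ ‖p‖ := by
    rcases eq_or_ne p 0 with hp | hp
    · simp [hp]
    · exact (hA p hp).le
  refine (pow_le_pow_iff_left₀ (norm_nonneg _) (norm_nonneg _) two_ne_zero).1 ?_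
  nlinarith [norm_nonneg (A p)]

theorem norm_perturbation_apply_eq_iff (hU : ∀ x ∈ Sᗮ, U x ∈ Tᗮ)
    (hU_iso : ∀ x ∈ Sᗮ, ‖U x‖ = ‖x‖) (hA : ∀ f, f ≠ 0 → ‖A f‖ < ‖f‖) {x : H} :
    ‖perturbation U S T A x‖ = ‖x‖ ↔ x ∈ Sᗮ := by
  have h := norm_sq_sub_norm_perturbation_apply_sq (A := A) hU hU_iso x
  rw [← Submodule.orthogonalProjectionOnto_eq_zero_iff]
  set p := S.orthogonalProjectionOnto x
  constructor
  · intro hV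
    by_contra hp
    rw [hV, sub_self] at h
    nlinarith [hA p hp, norm_nonneg (A p)]
  · intro hp
    rw [hp, map_zero, norm_zero, norm_zero, sub_self, sub_eq_zero] at h
    exact ((sq_eq_sq₀ (norm_nonneg _) (norm_nonneg _)).1 h).symm

theorem adjoint_perturbation [CompleteSpace H] [CompleteSpace S] [CompleteSpace T] :
    adjoint (perturbation U S T A) = perturbation (adjoint U) T S (adjoint A) := by
  simp only [perturbation, map_add, map_sub, adjoint_comp, adjoint_one, comp_assoc,
    (isSelfAdjoint_starProjection _).adjoint_eq, Submodule.adjoint_subtypeL,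
    Submodule.adjoint_orthogonalProjectionOnto]

end Perturbation

theorem IsCnu.of_apply_eq_of_norm_eq {H : Type*} [NormedAddCommGroup H] [InnerProductSpace ℂ H]
    [CompleteSpace H] {U V : H →L[ℂ] H} (hU : IsCnu U)
    (hV_adj : ∀ x, ‖V x‖ = ‖x‖ → adjoint V (V x) = x)
    (hV : ∀ x, ‖V x‖ = ‖x‖ → V x = U x)
    (hV' : ∀ y, ‖adjoint V y‖ = ‖y‖ → adjoint V y = adjoint U y) : IsCnu V := by
  intro K hK hVK hV'K hK_iso hK_surj
  have hUV : ∀ x ∈ K, V x = U x := fun x hx => hV x (hK_iso x hx)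
  have hUV' : ∀ y ∈ K, adjoint V y = adjoint U y := by
    intro y hy
    obtain ⟨x, hx, rfl⟩ := hK_surj y hy
    apply hV'
    rw [hV_adj x (hK_iso x hx), hK_iso x hx]
  refine hU K hK (fun x hx => hUV x hx ▸ hVK x hx) (fun y hy => hUV' y hy ▸ hV'K y hy)
    (fun x hx => hUV x hx ▸ hK_iso x hx) fun y hy => ?_
  obtain ⟨x, hx, rfl⟩ := hK_surj y hy
  exact ⟨x, hx, (hUV x hx).symm⟩

theorem statement14_general
    {H : Type*} [NormedAddCommGroup H] [InnerProductSpace ℂ H] [CompleteSpace H]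
    (U₀ : H →L[ℂ] H) (hcnu : IsCnu U₀)
    (D Dstar : H →L[ℂ] H)
    (hDpos : D.IsPositive) (hD : D ∘L D = 1 - ContinuousLinearMap.adjoint U₀ ∘L U₀)
    (hDspos : Dstar.IsPositive)
    (hDs : Dstar ∘L Dstar = 1 - U₀ ∘L ContinuousLinearMap.adjoint U₀)
    (Dsp DspStar : Submodule ℂ H)
    (hDsp : Dsp = (LinearMap.range (D : H →ₗ[ℂ] H)).topologicalClosure)
    (hDspStar : DspStar = (LinearMap.range (Dstar : H →ₗ[ℂ] H)).topologicalClosure)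
    [FiniteDimensional ℂ ↥Dsp] [FiniteDimensional ℂ ↥DspStar]
    (A : ↥Dsp →L[ℂ] ↥DspStar)
    (hAstrict : ∀ f : ↥Dsp, f ≠ 0 → ‖A f‖ < ‖f‖)
    (UA : H →L[ℂ] H)
    (hUA : UA =
      ((1 : H →L[ℂ] H) - DspStar.subtypeL ∘L (Submodule.orthogonalProjectionOnto DspStar : H →L[ℂ] ↥DspStar))
          ∘L U₀ ∘L
          ((1 : H →L[ℂ] H) - Dsp.subtypeL ∘L (Submodule.orthogonalProjectionOnto Dsp : H →L[ℂ] ↥Dsp))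
        + DspStar.subtypeL ∘L A ∘L (Submodule.orthogonalProjectionOnto Dsp : H →L[ℂ] ↥Dsp))
    -- `DA` and `DAstar` are the positive square roots of `I - U_A* U_A` and `I - U_A U_A*`
    (DA : H →L[ℂ] H) (hDApos : DA.IsPositive)
    (hDA : DA ∘L DA = 1 - ContinuousLinearMap.adjoint UA ∘L UA)
    (DAstar : H →L[ℂ] H) (hDAstarpos : DAstar.IsPositive)
    (hDAstar : DAstar ∘L DAstar = 1 - UA ∘L ContinuousLinearMap.adjoint UA) :
    ‖UA‖ ≤ 1 ∧ IsCnu UA ∧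
      (LinearMap.range (DA : H →ₗ[ℂ] H)).topologicalClosure = Dsp ∧
      (LinearMap.range (DAstar : H →ₗ[ℂ] H)).topologicalClosure = DspStar := by
  have hD_sa := hDpos.isSelfAdjoint
  have hDs_sa := hDspos.isSelfAdjoint
  have hDs' : Dstar ∘L Dstar = 1 - adjoint (adjoint U₀) ∘L adjoint U₀ := by rwa [adjoint_adjoint]
  have hiso : ∀ x ∈ Dspᗮ, ‖U₀ x‖ = ‖x‖ :=
    hDsp ▸ fun x => (mem_orthogonal_closure_range_defect_iff hD_sa hD).1
  have hiso' : ∀ y ∈ DspStarᗮ, ‖adjoint U₀ y‖ = ‖y‖ :=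
    hDspStar ▸ fun y => (mem_orthogonal_closure_range_defect_iff hDs_sa hDs').1
  have hmap : ∀ x ∈ Dspᗮ, U₀ x ∈ DspStarᗮ := hDsp ▸ hDspStar ▸ fun x =>
    apply_mem_orthogonal_closure_range_defect hD_sa hD hDs_sa hDs
  have hmap' : ∀ y ∈ DspStarᗮ, adjoint U₀ y ∈ Dspᗮ := hDsp ▸ hDspStar ▸ fun y =>
    apply_mem_orthogonal_closure_range_defect hDs_sa hDs' hD_sa (by rwa [adjoint_adjoint])
  replace hUA : UA = perturbation U₀ Dsp DspStar A := hUA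
  have hUA_adj : adjoint UA = perturbation (adjoint U₀) DspStar Dsp (adjoint A) := by
    rw [hUA, adjoint_perturbation]
  have hisoA : ∀ x, ‖UA x‖ = ‖x‖ ↔ x ∈ Dspᗮ := fun x => by
    rw [hUA]; exact norm_perturbation_apply_eq_iff hmap hiso hAstrict
  have hisoA' : ∀ y, ‖adjoint UA y‖ = ‖y‖ ↔ y ∈ DspStarᗮ := fun y => by
    rw [hUA_adj]; exact norm_perturbation_apply_eq_iff hmap' hiso' (norm_adjoint_apply_lt hAstrict)
  refine ⟨opNorm_le_bound _ zero_le_one fun x => ?_, hcnu.of_apply_eq_of_norm_eq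
    (fun x hx => adjoint_apply_apply_of_norm_eq hDApos.isSelfAdjoint hDA hx)
    (fun x hx => ?_) (fun y hy => ?_),
    closure_range_defect_eq hDApos.isSelfAdjoint hDA hisoA,
    closure_range_defect_eq hDAstarpos.isSelfAdjoint (by rwa [adjoint_adjoint]) hisoA'⟩
  · rw [one_mul, hUA]
    exact norm_perturbation_apply_le hmap hiso hAstrict x
  · rw [hUA]
    exact perturbation_apply_of_mem_orthogonal hmap ((hisoA x).1 hx)
  · rw [hUA_adj]
    exact perturbation_apply_of_mem_orthogonal hmap' ((hisoA' y).1 hy)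

theorem statement14
    {H : Type*} [NormedAddCommGroup H] [InnerProductSpace ℂ H] [CompleteSpace H]
    [TopologicalSpace.SeparableSpace H]
    (U₀ : H →L[ℂ] H) (hU₀ : ‖U₀‖ ≤ 1) (hcnu : IsCnu U₀)
    (D Dstar : H →L[ℂ] H)
    (hDpos : D.IsPositive) (hD : D ∘L D = 1 - ContinuousLinearMap.adjoint U₀ ∘L U₀)
    (hDspos : Dstar.IsPositive)
    (hDs : Dstar ∘L Dstar = 1 - U₀ ∘L ContinuousLinearMap.adjoint U₀)
    (Dsp DspStar : Submodule ℂ H)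
    (hDsp : Dsp = (LinearMap.range (D : H →ₗ[ℂ] H)).topologicalClosure)
    (hDspStar : DspStar = (LinearMap.range (Dstar : H →ₗ[ℂ] H)).topologicalClosure)
    [FiniteDimensional ℂ ↥Dsp] [FiniteDimensional ℂ ↥DspStar]
    (n : ℕ) (hn : Module.finrank ℂ ↥Dsp = n) (hns : Module.finrank ℂ ↥DspStar = n)
    (A : ↥Dsp →L[ℂ] ↥DspStar)
    (hAstrict : ∀ f : ↥Dsp, f ≠ 0 → ‖A f‖ < ‖f‖)
    (UA : H →L[ℂ] H)
    (hUA : UA =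
      ((1 : H →L[ℂ] H) - DspStar.subtypeL ∘L (Submodule.orthogonalProjectionOnto DspStar : H →L[ℂ] ↥DspStar))
          ∘L U₀ ∘L
          ((1 : H →L[ℂ] H) - Dsp.subtypeL ∘L (Submodule.orthogonalProjectionOnto Dsp : H →L[ℂ] ↥Dsp))
        + DspStar.subtypeL ∘L A ∘L (Submodule.orthogonalProjectionOnto Dsp : H →L[ℂ] ↥Dsp))
    -- `DA` and `DAstar` are the positive square roots of `I - U_A* U_A` and `I - U_A U_A*`
    (DA : H →L[ℂ] H) (hDApos : DA.IsPositive)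
    (hDA : DA ∘L DA = 1 - ContinuousLinearMap.adjoint UA ∘L UA)
    (DAstar : H →L[ℂ] H) (hDAstarpos : DAstar.IsPositive)
    (hDAstar : DAstar ∘L DAstar = 1 - UA ∘L ContinuousLinearMap.adjoint UA) :
    ‖UA‖ ≤ 1 ∧ IsCnu UA ∧
      (LinearMap.range (DA : H →ₗ[ℂ] H)).topologicalClosure = Dsp ∧
      (LinearMap.range (DAstar : H →ₗ[ℂ] H)).topologicalClosure = DspStar :=
  statement14_general U₀ hcnu D Dstar hDpos hD hDspos hDs Dsp DspStar hDsp hDspStar A hAstrict UA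
    hUA DA hDApos hDA DAstar hDAstarpos hDAstar
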